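/- arXiv:1410.6205 — 3 statements merged into one kernel-verified Lean document; each statement's English description precedes it below -/
import Mathlib

section
/- Define a_j = (1/j)^j for positive integers j. Then the series ∑_{j=1}^∞ j · (a_j^{1/j} − a_{j+1}^{1/j}) diverges to infinity, i.e., the partial sums A_{n,1} = ∑_{j=1}^n j·((1/j) − (1/(j+1))^{(j+1)/j}) tend to infinity as n → ∞. -/
open Filter

lemma harmonic_shift_tendsto :
    Tendsto (fun n : ℕ => ∑ j ∈ Finset.Icc 1 n, (1 : ℝ) / ((j : ℝ) + 1)) atTop atTop := by
  have h : ∀ n : ℕ, ∑ j ∈ Finset.Icc 1 n, (1 : ℝ) / ((j : ℝ) + 1)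
      = (∑ i ∈ Finset.range (n + 1), (1 : ℝ) / ((i : ℝ) + 1)) - 1 := by
    intro n
    induction n with
    | zero => simp
    | succ m ih =>
      rw [Finset.sum_Icc_succ_top (by omega), Finset.sum_range_succ, ih]
      push_cast
      ring
  simp only [h]
  apply tendsto_atTop_add_const_right
  exact (Real.tendsto_sum_range_one_div_nat_succ_atTop).comp (tendsto_add_atTop_nat 1)

/-- With `a_j = (1/j)^j`, the series `∑ j (a_j^{1/j} - a_{j+1}^{1/j})` diverges:
the partial sums `A_{n,1} = ∑_{j=1}^n j ((1/j) - (1/(j+1))^{(j+1)/j})` tend to `∞`. -/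
theorem partial_sums_p_one_tendsto_atTop :
    Tendsto
      (fun n : ℕ => ∑ j ∈ Finset.Icc 1 n,
        (j : ℝ) * (1 / (j : ℝ) - (1 / ((j : ℝ) + 1)) ^ (((j : ℝ) + 1) / (j : ℝ))))
      atTop atTop := by
  apply tendsto_atTop_mono _ harmonic_shift_tendsto
  intro n
  apply Finset.sum_le_sum
  intro j hj
  have hj1 : 1 ≤ j := (Finset.mem_Icc.mp hj).1
  have hjr : (1 : ℝ) ≤ (j : ℝ) := by exact_mod_cast hj1
  have hjpos : (0 : ℝ) < j := lt_of_lt_of_le one_pos hjr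
  have hx0 : (0 : ℝ) < 1 / ((j : ℝ) + 1) := by positivity
  have hx1 : 1 / ((j : ℝ) + 1) ≤ 1 := by
    rw [div_le_one (by linarith)]; linarith
  have hexp : (1 : ℝ) ≤ ((j : ℝ) + 1) / (j : ℝ) := by
    rw [le_div_iff₀ hjpos]; linarith
  have hpow : (1 / ((j : ℝ) + 1)) ^ (((j : ℝ) + 1) / (j : ℝ)) ≤ 1 / ((j : ℝ) + 1) := by
    calc (1 / ((j : ℝ) + 1)) ^ (((j : ℝ) + 1) / (j : ℝ))
        ≤ (1 / ((j : ℝ) + 1)) ^ (1 : ℝ) :=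
          Real.rpow_le_rpow_of_exponent_ge hx0 hx1 hexp
      _ = 1 / ((j : ℝ) + 1) := Real.rpow_one _
  have key : (j : ℝ) * (1 / (j : ℝ) - 1 / ((j : ℝ) + 1)) = 1 / ((j : ℝ) + 1) := by
    field_simp
    ring
  calc (1 : ℝ) / ((j : ℝ) + 1) = (j : ℝ) * (1 / (j : ℝ) - 1 / ((j : ℝ) + 1)) := key.symm
    _ ≤ (j : ℝ) * (1 / (j : ℝ) - (1 / ((j : ℝ) + 1)) ^ (((j : ℝ) + 1) / (j : ℝ))) := by
        apply mul_le_mul_of_nonneg_left _ hjpos.le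
        linarith
end

section
/- The limit as j → ∞ (over positive integers) of [1/j − (1/(j+1))^{(j+1)/j}] / [(1/j)² · log(j+1)] equals 1. In particular, [1/j − (1/(j+1))^{(j+1)/j}]/(1/j)² tends to infinity as j → ∞. -/
open Filter

/-- `[1/j - (1/(j+1))^{(j+1)/j}] / [(1/j)² log(j+1)] → 1` as `j → ∞`; in particular
`[1/j - (1/(j+1))^{(j+1)/j}] / (1/j)² → ∞`. -/
theorem diff_over_sq_log_tendsto_one :
    Tendsto
      (fun j : ℕ =>
        (1 / (j : ℝ) - (1 / ((j : ℝ) + 1)) ^ (((j : ℝ) + 1) / (j : ℝ)))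
          / ((1 / (j : ℝ)) ^ 2 * Real.log ((j : ℝ) + 1)))
      atTop (nhds 1)
    ∧ Tendsto
      (fun j : ℕ =>
        (1 / (j : ℝ) - (1 / ((j : ℝ) + 1)) ^ (((j : ℝ) + 1) / (j : ℝ)))
          / (1 / (j : ℝ)) ^ 2)
      atTop atTop := by
  set u : ℕ → ℝ := fun j => Real.log ((j : ℝ) + 1) / (j : ℝ) with hu_def
  have hj : Tendsto (fun j : ℕ => (j : ℝ)) atTop atTop := tendsto_natCast_atTop_atTop
  have hj1 : Tendsto (fun j : ℕ => (j : ℝ) + 1) atTop atTop :=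
    tendsto_atTop_add_const_right _ 1 hj
  have hlog : Tendsto (fun j : ℕ => Real.log ((j : ℝ) + 1)) atTop atTop :=
    Real.tendsto_log_atTop.comp hj1
  have hinvj : Tendsto (fun j : ℕ => 1 / (j : ℝ)) atTop (nhds 0) :=
    tendsto_one_div_atTop_nhds_zero_nat
  have hratio : Tendsto (fun j : ℕ => ((j : ℝ) + 1) / (j : ℝ)) atTop (nhds 1) := by
    have heq : (fun j : ℕ => ((j : ℝ) + 1) / (j : ℝ)) =ᶠ[atTop]
        fun j : ℕ => 1 + 1 / (j : ℝ) := by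
      filter_upwards [eventually_ge_atTop 1] with j hj
      have hj0 : (j : ℝ) ≠ 0 := by
        have : (1 : ℝ) ≤ (j : ℝ) := by exact_mod_cast hj
        linarith
      field_simp
    rw [tendsto_congr' heq]
    simpa using tendsto_const_nhds.add hinvj
  have hratio' : Tendsto (fun j : ℕ => (j : ℝ) / ((j : ℝ) + 1)) atTop (nhds 1) := by
    have := hratio.inv₀ one_ne_zero
    simp only [one_div, inv_inv, inv_div] at this ⊢
    simpa using this
  have hu0 : Tendsto u atTop (nhds 0) := by
    have h1 : Tendsto (fun j : ℕ => Real.log ((j : ℝ) + 1) / ((j : ℝ) + 1)) atTop (nhds 0) :=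
      (Real.isLittleO_log_id_atTop.tendsto_div_nhds_zero).comp hj1
    have heq : (fun j : ℕ => (Real.log ((j : ℝ) + 1) / ((j : ℝ) + 1)) * (((j : ℝ) + 1) / (j : ℝ)))
        =ᶠ[atTop] u := by
      filter_upwards [eventually_ge_atTop 1] with j hj
      have hj10 : ((j : ℝ) + 1) ≠ 0 := by positivity
      simp only [hu_def]
      field_simp
    have := h1.mul hratio
    rw [tendsto_congr' heq] at this
    simpa using this
  have hexp : Tendsto (fun j : ℕ => Real.exp (-(u j))) atTop (nhds 1) := by
    have : Tendsto (fun j : ℕ => -(u j)) atTop (nhds 0) := by simpa using hu0.neg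
    simpa [Function.comp_def] using (Real.continuous_exp.tendsto 0).comp this
  -- (exp x - 1)/x → 1 as x → 0, x ≠ 0
  have hslope : Tendsto (fun x : ℝ => x⁻¹ * (Real.exp x - 1)) (nhdsWithin 0 {(0 : ℝ)}ᶜ)
      (nhds 1) := by
    have h := Real.hasDerivAt_exp 0
    rw [hasDerivAt_iff_tendsto_slope] at h
    simpa [slope_fun_def, Real.exp_zero] using h
  have hneg_u : Tendsto (fun j : ℕ => -(u j)) atTop (nhdsWithin 0 {(0 : ℝ)}ᶜ) := by
    rw [tendsto_nhdsWithin_iff]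
    constructor
    · simpa using hu0.neg
    · filter_upwards [eventually_ge_atTop 1] with j hj
      have hj0 : (0 : ℝ) < (j : ℝ) := by exact_mod_cast Nat.lt_of_lt_of_le Nat.zero_lt_one hj
      have hL : (0 : ℝ) < Real.log ((j : ℝ) + 1) := Real.log_pos (by linarith)
      have : 0 < u j := div_pos hL hj0
      simp only [Set.mem_compl_iff, Set.mem_singleton_iff]
      intro hc
      rw [neg_eq_zero] at hc
      exact this.ne' hc
  have hphi : Tendsto (fun j : ℕ => (1 - Real.exp (-(u j))) / (u j)) atTop (nhds 1) := by
    have := hslope.comp hneg_u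
    have heq : (fun j : ℕ => (-(u j))⁻¹ * (Real.exp (-(u j)) - 1))
        = fun j : ℕ => (1 - Real.exp (-(u j))) / (u j) := by
      funext j
      rw [← div_eq_inv_mul, div_neg, ← neg_div, neg_sub]
    rw [← heq]
    exact this
  have hsmall : Tendsto (fun j : ℕ => (j : ℝ) / (((j : ℝ) + 1) * Real.log ((j : ℝ) + 1)))
      atTop (nhds 0) := by
    have h1 : Tendsto (fun j : ℕ => (Real.log ((j : ℝ) + 1))⁻¹) atTop (nhds 0) :=
      hlog.inv_tendsto_atTop
    have := hratio'.mul h1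
    have heq : (fun j : ℕ => ((j : ℝ) / ((j : ℝ) + 1)) * (Real.log ((j : ℝ) + 1))⁻¹)
        = fun j : ℕ => (j : ℝ) / (((j : ℝ) + 1) * Real.log ((j : ℝ) + 1)) := by
      funext j
      rw [div_eq_mul_inv, div_eq_mul_inv, mul_inv]
      ring
    rw [heq] at this
    simpa using this
  -- key pointwise identity eventually
  have hkey : (fun j : ℕ =>
        (1 / (j : ℝ) - (1 / ((j : ℝ) + 1)) ^ (((j : ℝ) + 1) / (j : ℝ)))
          / ((1 / (j : ℝ)) ^ 2 * Real.log ((j : ℝ) + 1)))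
      =ᶠ[atTop] fun j : ℕ =>
        (1 - Real.exp (-(u j))) / (u j)
          + Real.exp (-(u j)) * ((j : ℝ) / (((j : ℝ) + 1) * Real.log ((j : ℝ) + 1))) := by
    filter_upwards [eventually_ge_atTop 1] with j hj
    have hj0 : (0 : ℝ) < (j : ℝ) := by exact_mod_cast Nat.lt_of_lt_of_le Nat.zero_lt_one hj
    have hj1p : (0 : ℝ) < (j : ℝ) + 1 := by linarith
    have hL : (0 : ℝ) < Real.log ((j : ℝ) + 1) := Real.log_pos (by linarith)
    set L := Real.log ((j : ℝ) + 1) with hL_def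
    have hrpow : (1 / ((j : ℝ) + 1)) ^ (((j : ℝ) + 1) / (j : ℝ))
        = (1 / ((j : ℝ) + 1)) * Real.exp (-(u j)) := by
      rw [Real.rpow_def_of_pos (by positivity)]
      rw [Real.log_div one_ne_zero (ne_of_gt hj1p), Real.log_one]
      have : (0 - L) * (((j : ℝ) + 1) / (j : ℝ)) = -L + -(u j) := by
        simp only [hu_def, ← hL_def]
        field_simp
        ring
      rw [this, Real.exp_add, Real.exp_neg, Real.exp_log hj1p, one_div]
    rw [hrpow]
    have hu_eq : u j = L / (j : ℝ) := rfl
    set e := Real.exp (-(u j)) with he_def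
    rw [hu_eq]
    field_simp
    ring
  constructor
  · rw [tendsto_congr' hkey]
    have := hphi.add (hexp.mul hsmall)
    simpa using this
  · have hpart1 : Tendsto (fun j : ℕ =>
        (1 / (j : ℝ) - (1 / ((j : ℝ) + 1)) ^ (((j : ℝ) + 1) / (j : ℝ)))
          / ((1 / (j : ℝ)) ^ 2 * Real.log ((j : ℝ) + 1))) atTop (nhds 1) := by
      rw [tendsto_congr' hkey]
      have := hphi.add (hexp.mul hsmall)
      simpa using this
    have hmul := hpart1.pos_mul_atTop one_pos hlog
    have heq : (fun j : ℕ =>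
        ((1 / (j : ℝ) - (1 / ((j : ℝ) + 1)) ^ (((j : ℝ) + 1) / (j : ℝ)))
          / ((1 / (j : ℝ)) ^ 2 * Real.log ((j : ℝ) + 1))) * Real.log ((j : ℝ) + 1))
        =ᶠ[atTop] fun j : ℕ =>
        (1 / (j : ℝ) - (1 / ((j : ℝ) + 1)) ^ (((j : ℝ) + 1) / (j : ℝ)))
          / (1 / (j : ℝ)) ^ 2 := by
      filter_upwards [eventually_ge_atTop 1] with j hj
      have hj0 : (0 : ℝ) < (j : ℝ) := by exact_mod_cast Nat.lt_of_lt_of_le Nat.zero_lt_one hj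
      have hL : (0 : ℝ) < Real.log ((j : ℝ) + 1) := Real.log_pos (by linarith)
      rw [div_mul_eq_mul_div, mul_comm ((1 / (j : ℝ)) ^ 2), ← div_div,
        mul_div_assoc, div_self hL.ne', mul_one]
    rw [tendsto_congr' heq] at hmul
    exact hmul
end

section
/- Fix p > 1, k ∈ ℤ, s ∈ (0, 2], and let μ₁(z) = |(i−z)/(i+z)|^{−(k+1)p+s+2k}, μ₂(z) = |(i−z)/(i+z)|^{(1−s−k)p+s+2k} on the upper half plane. Then (μ₁, μ₂) satisfies the A_p⁺ condition — i.e., there is c > 0 with (avg_{D∩ℝ₊²} μ₁) · (avg_{D∩ℝ₊²} μ₂^{−p'/p})^{p/p'} ≤ c for all disks D centered at points of the real axis — if and only if s + 2k + 2 > (k+1)p and p(s + k + 1) > s + 2k + 2. -/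
open MeasureTheory Complex Metric Set

/-- Modulus of the Cayley transform `φ(z) = (i-z)/(i+z)`. -/
noncomputable def cayleyAbs (z : ℂ) : ℝ := ‖(Complex.I - z) / (Complex.I + z)‖

/-- The open upper half plane, as a subset of `ℂ`. -/
def upperHalf : Set ℂ := {z : ℂ | 0 < z.im}

lemma cayleyAbs_eq (z : ℂ) :
    cayleyAbs z = ‖Complex.I - z‖ / ‖Complex.I + z‖ := by
  simp [cayleyAbs, map_div₀]

lemma I_add_ne {z : ℂ} (hz : z ∈ upperHalf) : Complex.I + z ≠ 0 := by
  intro h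
  have : (Complex.I + z).im = 0 := by rw [h]; simp
  simp only [Complex.add_im, Complex.I_im] at this
  have hz' : 0 < z.im := hz
  linarith

lemma one_le_abs_I_add {z : ℂ} (hz : z ∈ upperHalf) : 1 ≤ ‖Complex.I + z‖ := by
  have h := Complex.abs_im_le_norm (Complex.I + z)
  have hz' : 0 < z.im := hz
  simp only [Complex.add_im, Complex.I_im] at h
  rw [abs_of_pos (by linarith)] at h
  linarith

lemma abs_I_sub_le_abs_I_add {z : ℂ} (hz : z ∈ upperHalf) :
    ‖Complex.I - z‖ ≤ ‖Complex.I + z‖ := by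
  have hz' : 0 < z.im := hz
  have h1 := Complex.sq_norm (Complex.I - z)
  have h2 := Complex.sq_norm (Complex.I + z)
  have e1 : Complex.normSq (Complex.I - z) = z.re ^ 2 + (1 - z.im) ^ 2 := by
    simp [Complex.normSq_apply, Complex.sub_re, Complex.sub_im]; ring
  have e2 : Complex.normSq (Complex.I + z) = z.re ^ 2 + (1 + z.im) ^ 2 := by
    simp [Complex.normSq_apply, Complex.add_re, Complex.add_im]; ring
  nlinarith [norm_nonneg (Complex.I - z), norm_nonneg (Complex.I + z)]

lemma cayleyAbs_le_one {z : ℂ} (hz : z ∈ upperHalf) : cayleyAbs z ≤ 1 := by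
  rw [cayleyAbs_eq]
  rw [div_le_one (lt_of_lt_of_le one_pos (one_le_abs_I_add hz))]
  exact abs_I_sub_le_abs_I_add hz

lemma cayleyAbs_nonneg (z : ℂ) : 0 ≤ cayleyAbs z := norm_nonneg _

lemma cayleyAbs_le_abs_I_sub {z : ℂ} (hz : z ∈ upperHalf) :
    cayleyAbs z ≤ ‖Complex.I - z‖ := by
  rw [cayleyAbs_eq]
  exact div_le_self (norm_nonneg _) (one_le_abs_I_add hz)

lemma abs_I_add_le (z : ℂ) :
    ‖Complex.I + z‖ ≤ ‖Complex.I - z‖ + 2 := by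
  have : Complex.I + z = (z - Complex.I) + 2 * Complex.I := by ring
  rw [this]
  refine le_trans (norm_add_le _ _) ?_
  rw [norm_sub_rev]
  simp

lemma le_cayleyAbs {z : ℂ} (hz : z ∈ upperHalf) :
    ‖Complex.I - z‖ / (‖Complex.I - z‖ + 2) ≤ cayleyAbs z := by
  rw [cayleyAbs_eq]
  have h0 : 0 < ‖Complex.I + z‖ := lt_of_lt_of_le one_pos (one_le_abs_I_add hz)
  rw [div_le_div_iff₀ (by positivity) h0]
  nlinarith [abs_I_add_le z, norm_nonneg (Complex.I - z)]

lemma measurable_cayleyAbs : Measurable cayleyAbs := by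
  have : cayleyAbs = fun z => ‖Complex.I - z‖ / ‖Complex.I + z‖ := by
    funext z; exact cayleyAbs_eq z
  rw [this]
  exact ((continuous_norm.comp (continuous_const.sub continuous_id)).measurable).div
    ((continuous_norm.comp (continuous_const.add continuous_id)).measurable)

lemma measurable_integrand (α : ℝ) :
    Measurable fun z => ENNReal.ofReal (cayleyAbs z ^ α) := by
  have h := measurable_cayleyAbs
  fun_prop

lemma measurable_dist_integrand (c : ℂ) (α : ℝ) :
    Measurable fun z : ℂ => ENNReal.ofReal (‖z - c‖ ^ α) := by
  have h : Measurable fun z : ℂ => ‖z - c‖ :=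
    (continuous_norm.comp (continuous_id.sub continuous_const)).measurable
  fun_prop

lemma measurableSet_upperHalf : MeasurableSet upperHalf := by
  have : IsOpen upperHalf := isOpen_lt continuous_const Complex.continuous_im
  exact this.measurableSet


/-- helper: `(x^n)^β = (x^β)^n` for `0 ≤ x`. -/
lemma pow_rpow_comm {x : ℝ} (hx : 0 ≤ x) (β : ℝ) (n : ℕ) :
    ((x ^ n : ℝ)) ^ β = (x ^ β) ^ n := by
  rw [← Real.rpow_natCast x n, ← Real.rpow_mul hx, mul_comm, Real.rpow_mul hx,
    Real.rpow_natCast]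

lemma real_rpow_add_two {x : ℝ} (hx : 0 < x) (α : ℝ) : x ^ α * x ^ 2 = x ^ (α + 2) := by
  rw [show (x:ℝ) ^ (2:ℕ) = x ^ ((2:ℕ):ℝ) from (Real.rpow_natCast x 2).symm,
    ← Real.rpow_add hx]
  norm_num

/-- annuli -/
def ann (c : ℂ) (R : ℝ) (n : ℕ) : Set ℂ :=
  ball c (R * (1/2)^n) \ ball c (R * (1/2)^(n+1))

lemma measurableSet_ann (c : ℂ) (R : ℝ) (n : ℕ) : MeasurableSet (ann c R n) :=
  measurableSet_ball.diff measurableSet_ball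

lemma ann_subset_ball (c : ℂ) {R : ℝ} (hR : 0 ≤ R) (n : ℕ) : ann c R n ⊆ ball c R := by
  refine diff_subset.trans (ball_subset_ball ?_)
  calc R * (1/2)^n ≤ R * 1 := by
        apply mul_le_mul_of_nonneg_left _ hR
        exact pow_le_one₀ (by norm_num) (by norm_num)
    _ = R := mul_one R

lemma ann_disjoint (c : ℂ) {R : ℝ} (hR : 0 ≤ R) : Pairwise (Function.onFun Disjoint (ann c R)) := by
  have key : ∀ m n : ℕ, m < n → Disjoint (ann c R m) (ann c R n) := by
    intro m n hmn
    have hsub : ann c R n ⊆ ball c (R * (1/2)^(m+1)) := by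
      refine diff_subset.trans (ball_subset_ball ?_)
      apply mul_le_mul_of_nonneg_left _ hR
      exact pow_le_pow_of_le_one (by norm_num) (by norm_num) hmn
    exact (Set.disjoint_sdiff_left).mono_right hsub
  intro m n hmn
  rcases hmn.lt_or_gt with h | h
  · exact key m n h
  · exact (key n m h).symm

lemma volume_ann (c : ℂ) {R : ℝ} (hR : 0 < R) (n : ℕ) :
    volume (ann c R n) = ENNReal.ofReal ((3/4) * (R * (1/2)^n)^2) * NNReal.pi := by
  have hrn : (0:ℝ) < R * (1/2)^n := by positivity
  have hsub : ball c (R * (1/2)^(n+1)) ⊆ ball c (R * (1/2)^n) := by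
    apply ball_subset_ball
    apply mul_le_mul_of_nonneg_left _ hR.le
    exact pow_le_pow_of_le_one (by norm_num) (by norm_num) (Nat.le_succ n)
  rw [ann, measure_diff hsub measurableSet_ball.nullMeasurableSet
      (by rw [Complex.volume_ball]; exact ENNReal.mul_ne_top (by simp) ENNReal.coe_ne_top),
    Complex.volume_ball, Complex.volume_ball]
  have h1 : R * (1/2)^(n+1) = (R * (1/2)^n) / 2 := by ring
  rw [h1]
  rw [← ENNReal.sub_mul (fun _ _ => ENNReal.coe_ne_top)]
  congr 1
  rw [← ENNReal.ofReal_pow hrn.le, ← ENNReal.ofReal_pow (by positivity),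
    ← ENNReal.ofReal_sub _ (by positivity)]
  congr 1
  ring

lemma ennreal_pi_ne_zero : (NNReal.pi : ENNReal) ≠ 0 := by
  refine ENNReal.coe_ne_zero.mpr ?_
  rw [← NNReal.coe_ne_zero, NNReal.coe_real_pi]
  exact Real.pi_ne_zero

lemma rn_le_R {R : ℝ} (hR : 0 ≤ R) (n : ℕ) : R * (1/2 : ℝ)^n ≤ R := by
  calc R * (1/2:ℝ)^n ≤ R * 1 := by
        apply mul_le_mul_of_nonneg_left _ hR
        exact pow_le_one₀ (by norm_num) (by norm_num)
    _ = R := mul_one R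

theorem lintegral_rpow_ball_top {α : ℝ} (hα : α ≤ -2) (c : ℂ) {R : ℝ} (hR : 0 < R) :
    ∫⁻ z in ball c R, ENNReal.ofReal (‖z - c‖ ^ α) = ⊤ := by
  have hα0 : α ≤ 0 := by linarith
  have hmeas : Measurable fun z : ℂ => ENNReal.ofReal (‖z - c‖ ^ α) := by
    have h : Measurable fun z : ℂ => ‖z - c‖ :=
      (continuous_norm.comp (continuous_id.sub continuous_const)).measurable
    fun_prop
  refine top_le_iff.mp ?_
  have hsub : (⋃ n, ann c R n) ⊆ ball c R := iUnion_subset fun n => ann_subset_ball c hR.le n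
  have bound : ∀ n : ℕ, ENNReal.ofReal ((3/4) * R ^ (α+2)) * NNReal.pi ≤
      ∫⁻ z in ann c R n, ENNReal.ofReal (‖z - c‖ ^ α) := by
    intro n
    set rn : ℝ := R * (1/2)^n with hrn
    have hrnpos : 0 < rn := by positivity
    have hpt : ∀ z ∈ ann c R n,
        ENNReal.ofReal (rn ^ α) ≤ ENNReal.ofReal (‖z - c‖ ^ α) := by
      intro z hz
      have hd1 : dist z c < rn := mem_ball.mp hz.1
      have hd2 : R * (1/2)^(n+1) ≤ dist z c := by
        by_contra h
        exact hz.2 (mem_ball.mpr (lt_of_not_ge h))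
      have hdpos : 0 < dist z c := lt_of_lt_of_le (by positivity) hd2
      rw [Complex.dist_eq] at hd1 hdpos
      exact ENNReal.ofReal_le_ofReal (Real.rpow_le_rpow_of_nonpos hdpos hd1.le hα0)
    calc ENNReal.ofReal ((3/4) * R ^ (α+2)) * NNReal.pi
        ≤ ENNReal.ofReal ((3/4) * rn ^ (α+2)) * NNReal.pi := by
          refine mul_le_mul_left (ENNReal.ofReal_le_ofReal ?_) _
          have h2 := Real.rpow_le_rpow_of_nonpos hrnpos (rn_le_R hR.le n)
            (show α + 2 ≤ 0 by linarith)
          linarith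
      _ = ENNReal.ofReal (rn ^ α) * volume (ann c R n) := by
          rw [volume_ann c hR n, ← hrn, ← mul_assoc, ← ENNReal.ofReal_mul (by positivity)]
          congr 2
          rw [← real_rpow_add_two hrnpos α]
          ring
      _ = ∫⁻ _ in ann c R n, ENNReal.ofReal (rn ^ α) := (setLIntegral_const _ _).symm
      _ ≤ _ := setLIntegral_mono hmeas hpt
  calc (⊤ : ENNReal) = ∑' _ : ℕ, ENNReal.ofReal ((3/4) * R ^ (α+2)) * NNReal.pi := by
        rw [ENNReal.tsum_const_eq_top_of_ne_zero]
        apply mul_ne_zero _ ennreal_pi_ne_zero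
        simp only [ne_eq, ENNReal.ofReal_eq_zero, not_le]
        positivity
    _ ≤ ∑' n : ℕ, ∫⁻ z in ann c R n, ENNReal.ofReal (‖z - c‖ ^ α) :=
        ENNReal.tsum_le_tsum bound
    _ = ∫⁻ z in ⋃ n, ann c R n, ENNReal.ofReal (‖z - c‖ ^ α) :=
        (lintegral_iUnion (measurableSet_ann c R) (ann_disjoint c hR.le) _).symm
    _ ≤ _ := lintegral_mono_set hsub

theorem lintegral_rpow_ball_lt_top {α : ℝ} (hα : -2 < α) (hα0 : α ≤ 0) (c : ℂ) :
    ∫⁻ z in ball c 1, ENNReal.ofReal (‖z - c‖ ^ α) < ⊤ := by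
  set q : ℝ := (1/2 : ℝ) ^ (α + 2) with hqdef
  have hqpos : 0 < q := Real.rpow_pos_of_pos (by norm_num) _
  have hq1 : q < 1 := Real.rpow_lt_one (by norm_num) (by norm_num) (by linarith)
  -- coverage
  have cover : ball c 1 ⊆ {c} ∪ ⋃ n, ann c 1 n := by
    intro z hz
    by_cases hzc : z = c
    · exact Or.inl (by simp [hzc])
    · right
      have htpos : 0 < dist z c := dist_pos.mpr hzc
      have ht1 : dist z c < 1 := mem_ball.mp hz
      have hex : ∃ n : ℕ, (1/2:ℝ)^n ≤ dist z c := by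
        obtain ⟨n, hn⟩ := exists_pow_lt_of_lt_one htpos (by norm_num : (1/2:ℝ) < 1)
        exact ⟨n, hn.le⟩
      have hne : Nat.find hex ≠ 0 := by
        intro h
        have := Nat.find_spec hex
        rw [h] at this
        simp at this
        linarith
      have hsucc : (Nat.find hex - 1) + 1 = Nat.find hex := Nat.succ_pred_eq_of_pos
        (Nat.pos_of_ne_zero hne)
      refine Set.mem_iUnion.mpr ⟨Nat.find hex - 1, ?_, ?_⟩
      · rw [mem_ball, one_mul]
        exact lt_of_not_ge (Nat.find_min hex (by omega))
      · rw [mem_ball, one_mul, hsucc, not_lt]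
        exact Nat.find_spec hex
  -- per-annulus bound
  have bound : ∀ n : ℕ, (∫⁻ z in ann c 1 n, ENNReal.ofReal (‖z - c‖ ^ α))
      ≤ (ENNReal.ofReal 4 * NNReal.pi) * ENNReal.ofReal q ^ n := by
    intro n
    set u : ℝ := (1/2 : ℝ) ^ (n+1) with hu
    have hupos : 0 < u := by positivity
    have h2u : ((1/2:ℝ))^n = 2*u := by rw [hu]; ring
    have hpt : ∀ z ∈ ann c 1 n,
        ENNReal.ofReal (‖z - c‖ ^ α) ≤ ENNReal.ofReal (u ^ α) := by
      intro z hz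
      have hd2 : 1 * (1/2:ℝ)^(n+1) ≤ dist z c := by
        by_contra h
        exact hz.2 (mem_ball.mpr (lt_of_not_ge h))
      rw [one_mul] at hd2
      rw [Complex.dist_eq] at hd2
      exact ENNReal.ofReal_le_ofReal (Real.rpow_le_rpow_of_nonpos hupos hd2 hα0)
    have hreal : u ^ α * ((1/2:ℝ)^n)^2 ≤ 4 * q^n := by
      calc u^α * ((1/2:ℝ)^n)^2 = u^α * (2*u)^2 := by rw [h2u]
        _ = 4*(u^α*u^2) := by ring
        _ = 4*u^(α+2) := by rw [real_rpow_add_two hupos]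
        _ = 4*((1/2:ℝ)^(α+2))^(n+1) := by rw [hu, pow_rpow_comm (by norm_num) (α+2) (n+1)]
        _ = 4*(q^n*q) := by rw [← hqdef, pow_succ]
        _ ≤ 4*q^n := by nlinarith [pow_nonneg hqpos.le n]
    calc (∫⁻ z in ann c 1 n, ENNReal.ofReal (‖z - c‖ ^ α))
        ≤ ∫⁻ _ in ann c 1 n, ENNReal.ofReal (u ^ α) := setLIntegral_mono measurable_const hpt
      _ = ENNReal.ofReal (u ^ α) * volume (ann c 1 n) := setLIntegral_const _ _
      _ ≤ ENNReal.ofReal (u ^ α) * volume (ball c (1 * (1/2:ℝ)^n)) :=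
          mul_le_mul_right (measure_mono Set.diff_subset) _
      _ = ENNReal.ofReal (u ^ α * ((1/2:ℝ)^n)^2) * NNReal.pi := by
          rw [Complex.volume_ball, one_mul, ← ENNReal.ofReal_pow (by positivity),
            ← mul_assoc, ← ENNReal.ofReal_mul (by positivity)]
      _ ≤ ENNReal.ofReal (4 * q^n) * NNReal.pi :=
          mul_le_mul_left (ENNReal.ofReal_le_ofReal hreal) _
      _ = (ENNReal.ofReal 4 * NNReal.pi) * ENNReal.ofReal q ^ n := by
          rw [ENNReal.ofReal_mul (by norm_num), ENNReal.ofReal_pow hqpos.le]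
          ring
  have hsum :
      (∫⁻ z in ball c 1, ENNReal.ofReal (‖z - c‖ ^ α)) ≤
        (ENNReal.ofReal 4 * NNReal.pi) * (1 - ENNReal.ofReal q)⁻¹ := by
    calc (∫⁻ z in ball c 1, ENNReal.ofReal (‖z - c‖ ^ α))
        ≤ ∫⁻ z in {c} ∪ ⋃ n, ann c 1 n, ENNReal.ofReal (‖z - c‖ ^ α) :=
          lintegral_mono_set cover
      _ ≤ (∫⁻ z in {c}, ENNReal.ofReal (‖z - c‖ ^ α))
            + ∫⁻ z in ⋃ n, ann c 1 n, ENNReal.ofReal (‖z - c‖ ^ α) :=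
          lintegral_union_le _ _ _
      _ = ∫⁻ z in ⋃ n, ann c 1 n, ENNReal.ofReal (‖z - c‖ ^ α) := by
          rw [setLIntegral_measure_zero _ _ (measure_singleton c), zero_add]
      _ = ∑' n : ℕ, ∫⁻ z in ann c 1 n, ENNReal.ofReal (‖z - c‖ ^ α) :=
          lintegral_iUnion (measurableSet_ann c 1) (ann_disjoint c one_pos.le) _
      _ ≤ ∑' n : ℕ, (ENNReal.ofReal 4 * NNReal.pi) * ENNReal.ofReal q ^ n :=
          ENNReal.tsum_le_tsum bound
      _ = (ENNReal.ofReal 4 * NNReal.pi) * ∑' n : ℕ, ENNReal.ofReal q ^ n :=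
          ENNReal.tsum_mul_left
      _ = _ := by rw [ENNReal.tsum_geometric]
  refine lt_of_le_of_lt hsum ?_
  refine lt_of_le_of_ne le_top (ENNReal.mul_ne_top
    (ENNReal.mul_ne_top ENNReal.ofReal_ne_top ENNReal.coe_ne_top) ?_)
  rw [ne_eq, ENNReal.inv_eq_top]
  exact ne_of_gt (tsub_pos_of_lt (ENNReal.ofReal_lt_one.mpr hq1))

section Geometry

lemma half_ball_subset (x r : ℝ) (hr : 0 < r) :
    ball ((x:ℂ) + (r/2) * Complex.I) (r/2) ⊆ ball (x:ℂ) r ∩ upperHalf := by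
  intro z hz
  rw [mem_ball] at hz
  have hc'x : dist ((x:ℂ) + (r/2) * Complex.I) (x:ℂ) = r/2 := by
    rw [Complex.dist_eq]
    have : (x:ℂ) + (r/2) * Complex.I - x = (r/2 : ℝ) * Complex.I := by push_cast; ring
    rw [this, norm_mul, Complex.norm_real, Complex.norm_I, mul_one, Real.norm_eq_abs, abs_of_pos (by positivity)]
  constructor
  · rw [mem_ball]
    calc dist z (x:ℂ) ≤ dist z ((x:ℂ) + (r/2) * Complex.I) + dist ((x:ℂ) + (r/2) * Complex.I) (x:ℂ) :=
          dist_triangle _ _ _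
      _ < r/2 + r/2 := by rw [hc'x]; linarith
      _ = r := by ring
  · show 0 < z.im
    have him : |(z - ((x:ℂ) + (r/2) * Complex.I)).im| ≤ dist z ((x:ℂ) + (r/2) * Complex.I) := by
      rw [Complex.dist_eq]
      exact Complex.abs_im_le_norm _
    have h2 : (z - ((x:ℂ) + (r/2) * Complex.I)).im = z.im - r/2 := by simp
    rw [h2] at him
    have := abs_lt.mp (him.trans_lt hz)
    linarith [this.1]

lemma volD_facts (x r : ℝ) (hr : 0 < r) :
    ENNReal.ofReal ((r/2)^2) * NNReal.pi ≤ volume (ball (x:ℂ) r ∩ upperHalf) ∧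
    volume (ball (x:ℂ) r ∩ upperHalf) ≠ 0 ∧
    volume (ball (x:ℂ) r ∩ upperHalf) ≠ ⊤ := by
  have hlb : ENNReal.ofReal ((r/2)^2) * NNReal.pi ≤ volume (ball (x:ℂ) r ∩ upperHalf) := by
    calc ENNReal.ofReal ((r/2)^2) * NNReal.pi
        = volume (ball ((x:ℂ) + (r/2) * Complex.I) (r/2)) := by
          rw [Complex.volume_ball, ENNReal.ofReal_pow (by positivity)]
      _ ≤ _ := measure_mono (half_ball_subset x r hr)
  refine ⟨hlb, ?_, ?_⟩
  · intro h
    rw [h] at hlb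
    have : ENNReal.ofReal ((r/2)^2) * NNReal.pi ≠ 0 := by
      apply mul_ne_zero _ ennreal_pi_ne_zero
      simp only [ne_eq, ENNReal.ofReal_eq_zero, not_le]
      positivity
    exact this (le_antisymm hlb zero_le)
  · intro h
    have : volume (ball (x:ℂ) r ∩ upperHalf) ≤ volume (ball (x:ℂ) r) :=
      measure_mono inter_subset_left
    rw [h, Complex.volume_ball] at this
    exact (ENNReal.mul_ne_top (by simp) ENNReal.coe_ne_top) (top_le_iff.mp this)

lemma one_le_dist_real_I (x : ℝ) : 1 ≤ ‖(x:ℂ) - Complex.I‖ := by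
  have h := Complex.abs_im_le_norm ((x:ℂ) - Complex.I)
  simp only [Complex.sub_im, Complex.ofReal_im, Complex.I_im, zero_sub, abs_neg, abs_one] at h
  exact h

/-- lower bound for cayleyAbs from a lower bound on `|I - z|`. -/
lemma cayleyAbs_ge_of_dist_ge {z : ℂ} (hz : z ∈ upperHalf) {t : ℝ} (ht : 0 ≤ t)
    (h : t ≤ ‖Complex.I - z‖) : t / (t + 2) ≤ cayleyAbs z := by
  refine le_trans ?_ (le_cayleyAbs hz)
  rw [div_le_div_iff₀ (by linarith) (by positivity)]
  nlinarith [norm_nonneg (Complex.I - z)]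

end Geometry

section Avg

lemma rpow_three_eq (α : ℝ) : ((1:ℝ)/3) ^ α = (3:ℝ) ^ (-α) := by
  rw [one_div, Real.inv_rpow (by norm_num), ← Real.rpow_neg (by norm_num)]

lemma rpow_five_eq (α : ℝ) : ((1:ℝ)/5) ^ α = (5:ℝ) ^ (-α) := by
  rw [one_div, Real.inv_rpow (by norm_num), ← Real.rpow_neg (by norm_num)]

lemma avg_bound {α : ℝ} (hα : -2 < α) :
    ∃ C : ENNReal, C ≠ ⊤ ∧ ∀ (x r : ℝ), 0 < r →
      (volume (ball (x:ℂ) r ∩ upperHalf))⁻¹ *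
        ∫⁻ z in ball (x:ℂ) r ∩ upperHalf, ENNReal.ofReal (cayleyAbs z ^ α) ≤ C := by
  rcases le_or_gt 0 α with hα0 | hα0
  · -- nonnegative exponent : average bounded by 1
    refine ⟨1, ENNReal.one_ne_top, ?_⟩
    intro x r hr
    obtain ⟨hlb, hne0, hnetop⟩ := volD_facts x r hr
    set D := ball (x:ℂ) r ∩ upperHalf with hD
    have hpt : ∀ z ∈ D, ENNReal.ofReal (cayleyAbs z ^ α) ≤ 1 := by
      intro z hz
      exact ENNReal.ofReal_le_one.mpr
        (Real.rpow_le_one (cayleyAbs_nonneg z) (cayleyAbs_le_one hz.2) hα0)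
    calc (volume D)⁻¹ * ∫⁻ z in D, ENNReal.ofReal (cayleyAbs z ^ α)
        ≤ (volume D)⁻¹ * ∫⁻ _ in D, (1:ENNReal) := by
          exact mul_le_mul_right (setLIntegral_mono measurable_const hpt) _
      _ = (volume D)⁻¹ * volume D := by rw [setLIntegral_const, one_mul]
      _ = 1 := ENNReal.inv_mul_cancel hne0 hnetop
  · -- negative exponent
    have hKlt : (∫⁻ z in ball Complex.I 1,
        ENNReal.ofReal (‖z - Complex.I‖ ^ α)) < ⊤ :=
      lintegral_rpow_ball_lt_top hα hα0.le Complex.I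
    set K := ∫⁻ z in ball Complex.I 1, ENNReal.ofReal (‖z - Complex.I‖ ^ α) with hK
    set a3 : ENNReal := ENNReal.ofReal ((3:ℝ) ^ (-α)) with ha3
    set a5 : ENNReal := ENNReal.ofReal ((5:ℝ) ^ (-α)) with ha5
    set V0 : ENNReal := ENNReal.ofReal (((1:ℝ)/8)^2) * NNReal.pi with hV0
    have hV0ne : V0 ≠ 0 := by
      apply mul_ne_zero _ ennreal_pi_ne_zero
      simp only [ne_eq, ENNReal.ofReal_eq_zero, not_le]
      norm_num
    refine ⟨a3 + a5 + V0⁻¹ * (a3 * K), ?_, ?_⟩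
    · refine ENNReal.add_ne_top.mpr ⟨ENNReal.add_ne_top.mpr
        ⟨ENNReal.ofReal_ne_top, ENNReal.ofReal_ne_top⟩, ?_⟩
      exact ENNReal.mul_ne_top (ENNReal.inv_ne_top.mpr hV0ne)
        (ENNReal.mul_ne_top ENNReal.ofReal_ne_top hKlt.ne)
    intro x r hr
    obtain ⟨hlb, hne0, hnetop⟩ := volD_facts x r hr
    set D := ball (x:ℂ) r ∩ upperHalf with hD
    set B := ball Complex.I 1 with hB
    -- integral over D \ B
    have h1 : ∀ z ∈ D \ B, ENNReal.ofReal (cayleyAbs z ^ α) ≤ a3 := by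
      intro z hz
      have hzH : z ∈ upperHalf := hz.1.2
      have ht : 1 ≤ ‖Complex.I - z‖ := by
        rw [norm_sub_rev]
        have := hz.2
        rw [hB, mem_ball, not_lt, Complex.dist_eq] at this
        exact this
      have hφ : (1:ℝ)/3 ≤ cayleyAbs z := by
        have h := cayleyAbs_ge_of_dist_ge hzH (zero_le_one) ht
        norm_num at h
        exact h
      rw [ha3, ← rpow_three_eq]
      exact ENNReal.ofReal_le_ofReal
        (Real.rpow_le_rpow_of_nonpos (by norm_num) hφ hα0.le)
    have hI1 : (∫⁻ z in D \ B, ENNReal.ofReal (cayleyAbs z ^ α)) ≤ a3 * volume D := by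
      calc (∫⁻ z in D \ B, ENNReal.ofReal (cayleyAbs z ^ α))
          ≤ ∫⁻ _ in D \ B, a3 := setLIntegral_mono measurable_const h1
        _ = a3 * volume (D \ B) := setLIntegral_const _ _
        _ ≤ a3 * volume D := mul_le_mul_right (measure_mono diff_subset) _
    have hsplit : (∫⁻ z in D, ENNReal.ofReal (cayleyAbs z ^ α)) ≤
        (∫⁻ z in D \ B, ENNReal.ofReal (cayleyAbs z ^ α)) +
        ∫⁻ z in D ∩ B, ENNReal.ofReal (cayleyAbs z ^ α) := by
      conv_lhs => rw [← Set.diff_union_inter D B]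
      exact lintegral_union_le _ _ _
    rcases le_or_gt r (1/4 : ℝ) with hr4 | hr4
    · -- small radius : D stays away from I
      have h2 : ∀ z ∈ D ∩ B, ENNReal.ofReal (cayleyAbs z ^ α) ≤ a5 := by
        intro z hz
        have hzH : z ∈ upperHalf := hz.1.2
        have hxz : dist z (x:ℂ) < r := mem_ball.mp hz.1.1
        have hxI : 1 ≤ dist (x:ℂ) Complex.I := by
          rw [Complex.dist_eq]; exact one_le_dist_real_I x
        have ht : (1:ℝ)/2 ≤ ‖Complex.I - z‖ := by
          rw [norm_sub_rev, ← Complex.dist_eq]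
          have htri : dist (x:ℂ) Complex.I ≤ dist (x:ℂ) z + dist z Complex.I :=
            dist_triangle _ _ _
          rw [dist_comm (x:ℂ) z] at htri
          linarith
        have hφ : (1:ℝ)/5 ≤ cayleyAbs z := by
          have h := cayleyAbs_ge_of_dist_ge hzH (by norm_num) ht
          norm_num at h
          calc (1:ℝ)/5 ≤ 1/5 := le_refl _
            _ ≤ cayleyAbs z := by linarith
        rw [ha5, ← rpow_five_eq]
        exact ENNReal.ofReal_le_ofReal
          (Real.rpow_le_rpow_of_nonpos (by norm_num) hφ hα0.le)
      have hI2 : (∫⁻ z in D ∩ B, ENNReal.ofReal (cayleyAbs z ^ α)) ≤ a5 * volume D := by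
        calc (∫⁻ z in D ∩ B, ENNReal.ofReal (cayleyAbs z ^ α))
            ≤ ∫⁻ _ in D ∩ B, a5 := setLIntegral_mono measurable_const h2
          _ = a5 * volume (D ∩ B) := setLIntegral_const _ _
          _ ≤ a5 * volume D := mul_le_mul_right (measure_mono inter_subset_left) _
      calc (volume D)⁻¹ * ∫⁻ z in D, ENNReal.ofReal (cayleyAbs z ^ α)
          ≤ (volume D)⁻¹ * ((a3 + a5) * volume D) := by
            refine mul_le_mul_right (hsplit.trans ?_) _
            rw [add_mul]
            exact add_le_add hI1 hI2
        _ = (a3 + a5) * ((volume D)⁻¹ * volume D) := by ring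
        _ = a3 + a5 := by rw [ENNReal.inv_mul_cancel hne0 hnetop, mul_one]
        _ ≤ a3 + a5 + V0⁻¹ * (a3 * K) := self_le_add_right _ _
    · -- large radius
      have h2 : ∀ z ∈ D ∩ B, ENNReal.ofReal (cayleyAbs z ^ α) ≤
          a3 * ENNReal.ofReal (‖z - Complex.I‖ ^ α) := by
        intro z hz
        have hzH : z ∈ upperHalf := hz.1.2
        by_cases hzI : z = Complex.I
        · have : cayleyAbs z = 0 := by
            rw [hzI, cayleyAbs]
            simp
          rw [this, Real.zero_rpow (ne_of_lt hα0), ENNReal.ofReal_zero]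
          exact zero_le
        · have htpos : 0 < ‖Complex.I - z‖ := by
            rw [norm_sub_rev, ← Complex.dist_eq]
            exact dist_pos.mpr hzI
          set t : ℝ := ‖Complex.I - z‖ with htdef
          have ht1 : t < 1 := by
            have := hz.2
            rw [hB, mem_ball, Complex.dist_eq, ← norm_sub_rev] at this
            exact this
          have hφ : t/3 ≤ cayleyAbs z := by
            refine le_trans ?_ (le_cayleyAbs hzH)
            rw [div_le_div_iff₀ (by norm_num) (by linarith)]
            nlinarith
          have hstep : cayleyAbs z ^ α ≤ (t/3) ^ α :=
            Real.rpow_le_rpow_of_nonpos (by positivity) hφ hα0.le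
          have heq : ((t:ℝ)/3) ^ α = (3:ℝ)^(-α) * t ^ α := by
            rw [Real.div_rpow htpos.le (by norm_num), Real.rpow_neg (by norm_num)]
            rw [div_eq_mul_inv, mul_comm]
          rw [ha3, ← ENNReal.ofReal_mul (by positivity)]
          refine ENNReal.ofReal_le_ofReal ?_
          rw [norm_sub_rev z Complex.I, ← htdef]
          calc cayleyAbs z ^ α ≤ (t/3) ^ α := hstep
            _ = (3:ℝ)^(-α) * t ^ α := heq
      have hI2 : (∫⁻ z in D ∩ B, ENNReal.ofReal (cayleyAbs z ^ α)) ≤ a3 * K := by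
        calc (∫⁻ z in D ∩ B, ENNReal.ofReal (cayleyAbs z ^ α))
            ≤ ∫⁻ z in D ∩ B, a3 * ENNReal.ofReal (‖z - Complex.I‖ ^ α) :=
              setLIntegral_mono (by
                have h := measurable_dist_integrand Complex.I α
                fun_prop) h2
          _ ≤ ∫⁻ z in B, a3 * ENNReal.ofReal (‖z - Complex.I‖ ^ α) :=
              lintegral_mono_set inter_subset_right
          _ = a3 * K := by
              rw [hK, hB]
              exact lintegral_const_mul a3 (measurable_dist_integrand Complex.I α)
      have hVD : V0 ≤ volume D := by
        refine le_trans ?_ hlb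
        rw [hV0]
        refine mul_le_mul_left (ENNReal.ofReal_le_ofReal ?_) _
        nlinarith
      calc (volume D)⁻¹ * ∫⁻ z in D, ENNReal.ofReal (cayleyAbs z ^ α)
          ≤ (volume D)⁻¹ * ((∫⁻ z in D \ B, ENNReal.ofReal (cayleyAbs z ^ α)) +
              ∫⁻ z in D ∩ B, ENNReal.ofReal (cayleyAbs z ^ α)) :=
            mul_le_mul_right hsplit _
        _ = (volume D)⁻¹ * (∫⁻ z in D \ B, ENNReal.ofReal (cayleyAbs z ^ α)) +
            (volume D)⁻¹ * ∫⁻ z in D ∩ B, ENNReal.ofReal (cayleyAbs z ^ α) := by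
            rw [mul_add]
        _ ≤ (volume D)⁻¹ * (a3 * volume D) + V0⁻¹ * (a3 * K) := by
            refine add_le_add (mul_le_mul_right hI1 _) ?_
            exact mul_le_mul' (ENNReal.inv_le_inv' hVD) hI2
        _ = a3 * ((volume D)⁻¹ * volume D) + V0⁻¹ * (a3 * K) := by ring_nf
        _ = a3 + V0⁻¹ * (a3 * K) := by
            rw [ENNReal.inv_mul_cancel hne0 hnetop, mul_one]
        _ ≤ a3 + a5 + V0⁻¹ * (a3 * K) := by
            exact add_le_add (self_le_add_right _ _) le_rfl

end Avg

section Bad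

lemma ballI_subset_D0 : ball Complex.I (1/2) ⊆ ball (((0:ℝ)):ℂ) 2 ∩ upperHalf := by
  intro z hz
  rw [mem_ball] at hz
  constructor
  · rw [mem_ball]
    calc dist z (((0:ℝ)):ℂ) ≤ dist z Complex.I + dist Complex.I (((0:ℝ)):ℂ) := dist_triangle _ _ _
      _ < 1/2 + 1 := by
          refine add_lt_add_of_lt_of_le hz ?_
          rw [Complex.dist_eq]
          simp
      _ < 2 := by norm_num
  · show 0 < z.im
    have him : |(z - Complex.I).im| ≤ ‖z - Complex.I‖ := Complex.abs_im_le_norm _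
    rw [← Complex.dist_eq] at him
    have h2 : (z - Complex.I).im = z.im - 1 := by simp
    rw [h2] at him
    have := abs_lt.mp (him.trans_lt hz)
    linarith [this.1]

lemma cayleyAbs_pos {z : ℂ} (hz : z ∈ upperHalf) (hzI : z ≠ Complex.I) : 0 < cayleyAbs z := by
  rw [cayleyAbs]
  refine norm_pos_iff.mpr (div_ne_zero ?_ (I_add_ne hz))
  exact sub_ne_zero_of_ne (Ne.symm hzI)

lemma lintegral_top_D0 {α : ℝ} (hα : α ≤ -2) :
    ∫⁻ z in ball (((0:ℝ)):ℂ) 2 ∩ upperHalf, ENNReal.ofReal (cayleyAbs z ^ α) = ⊤ := by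
  have hα0 : α ≤ 0 := by linarith
  refine top_le_iff.mp ?_
  have hpt : ∀ z ∈ ball Complex.I (1/2 : ℝ),
      ENNReal.ofReal (‖z - Complex.I‖ ^ α) ≤ ENNReal.ofReal (cayleyAbs z ^ α) := by
    intro z hz
    have hzH : z ∈ upperHalf := (ballI_subset_D0 hz).2
    by_cases hzI : z = Complex.I
    · rw [hzI]
      simp only [sub_self, norm_zero]
      rw [Real.zero_rpow (by linarith : α ≠ 0), ENNReal.ofReal_zero]
      exact zero_le
    · have hφpos : 0 < cayleyAbs z := cayleyAbs_pos hzH hzI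
      have hle : cayleyAbs z ≤ ‖z - Complex.I‖ := by
        rw [norm_sub_rev z Complex.I]
        exact cayleyAbs_le_abs_I_sub hzH
      exact ENNReal.ofReal_le_ofReal (Real.rpow_le_rpow_of_nonpos hφpos hle hα0)
  calc (⊤ : ENNReal)
      = ∫⁻ z in ball Complex.I (1/2 : ℝ), ENNReal.ofReal (‖z - Complex.I‖ ^ α) :=
        (lintegral_rpow_ball_top hα Complex.I (by norm_num)).symm
    _ ≤ ∫⁻ z in ball Complex.I (1/2 : ℝ), ENNReal.ofReal (cayleyAbs z ^ α) :=
        setLIntegral_mono (measurable_integrand α) hpt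
    _ ≤ _ := lintegral_mono_set ballI_subset_D0

lemma lintegral_pos_D0 (α : ℝ) :
    0 < ∫⁻ z in ball (((0:ℝ)):ℂ) 2 ∩ upperHalf, ENNReal.ofReal (cayleyAbs z ^ α) := by
  set S : Set ℂ := ball Complex.I (1/2 : ℝ) \ ball Complex.I (1/4 : ℝ) with hS
  have hSsub : S ⊆ ball (((0:ℝ)):ℂ) 2 ∩ upperHalf := diff_subset.trans ballI_subset_D0
  set m : ℝ := min (((1:ℝ)/9) ^ α) 1 with hm
  have hmpos : 0 < m := lt_min (Real.rpow_pos_of_pos (by norm_num) α) one_pos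
  have hpt : ∀ z ∈ S, ENNReal.ofReal m ≤ ENNReal.ofReal (cayleyAbs z ^ α) := by
    intro z hz
    have hzH : z ∈ upperHalf := (hSsub hz).2
    have ht : (1:ℝ)/4 ≤ ‖Complex.I - z‖ := by
      rw [norm_sub_rev, ← Complex.dist_eq]
      have := hz.2
      rw [mem_ball, not_lt] at this
      exact this
    have hφ : (1:ℝ)/9 ≤ cayleyAbs z := by
      have h := cayleyAbs_ge_of_dist_ge hzH (by norm_num) ht
      norm_num at h
      linarith
    refine ENNReal.ofReal_le_ofReal ?_
    rcases le_or_gt 0 α with h0 | h0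
    · calc m ≤ ((1:ℝ)/9) ^ α := min_le_left _ _
        _ ≤ cayleyAbs z ^ α := Real.rpow_le_rpow (by norm_num) hφ h0
    · calc m ≤ 1 := min_le_right _ _
        _ = (1:ℝ) ^ α := (Real.one_rpow α).symm
        _ ≤ cayleyAbs z ^ α := Real.rpow_le_rpow_of_nonpos (by linarith) (cayleyAbs_le_one hzH) h0.le
  have hvolS : 0 < volume S := by
    have hsub : ball Complex.I (1/4 : ℝ) ⊆ ball Complex.I (1/2 : ℝ) :=
      ball_subset_ball (by norm_num)
    rw [hS, measure_diff hsub measurableSet_ball.nullMeasurableSet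
        (by rw [Complex.volume_ball]; exact ENNReal.mul_ne_top (by simp) ENNReal.coe_ne_top),
      Complex.volume_ball, Complex.volume_ball,
      ← ENNReal.sub_mul (fun _ _ => ENNReal.coe_ne_top),
      ← ENNReal.ofReal_pow (by norm_num), ← ENNReal.ofReal_pow (by norm_num),
      ← ENNReal.ofReal_sub _ (by positivity)]
    apply ENNReal.mul_pos _ ennreal_pi_ne_zero
    simp only [ne_eq, ENNReal.ofReal_eq_zero, not_le]
    norm_num
  calc (0:ENNReal) < ENNReal.ofReal m * volume S :=
        ENNReal.mul_pos (by simp [hmpos]) hvolS.ne'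
    _ = ∫⁻ _ in S, ENNReal.ofReal m := (setLIntegral_const _ _).symm
    _ ≤ ∫⁻ z in S, ENNReal.ofReal (cayleyAbs z ^ α) :=
        setLIntegral_mono (measurable_integrand α) hpt
    _ ≤ _ := lintegral_mono_set hSsub

end Bad

/-- The two-weight `A_p` quantity
`(avg_D μ₁) ⬝ (avg_D μ₂^{-p'/p})^{p/p'}` for `μ₁ = |φ|^a`, `μ₂ = |φ|^b`, computed with
(extended-real valued) lower integrals so that non-integrability is recorded as `∞`. -/
noncomputable def apProduct (p p' a b : ℝ) (D : Set ℂ) : ENNReal :=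
  ((volume D)⁻¹ * ∫⁻ z in D, ENNReal.ofReal (cayleyAbs z ^ a))
    * ((volume D)⁻¹ * ∫⁻ z in D, ENNReal.ofReal (cayleyAbs z ^ (-(p' / p) * b))) ^ (p / p')

/-- For `p > 1`, `k ∈ ℤ`, `s ∈ (0,2]`, the pair `μ₁ = |φ|^{-(k+1)p+s+2k}`,
`μ₂ = |φ|^{(1-s-k)p+s+2k}` satisfies the `A_p⁺(ℝ₊²)` condition (a uniform bound of the
`A_p` quantity over all special disks, i.e. disks centered at points of the real axis)
if and only if `s + 2k + 2 > (k+1)p` and `p(s+k+1) > s + 2k + 2`. -/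
theorem pair_in_Ap_plus_iff (p p' s : ℝ) (k : ℤ) (hp : 1 < p) (hpp' : 1 / p + 1 / p' = 1)
    (hs0 : 0 < s) (hs2 : s ≤ 2) :
    (∃ c : ENNReal, c ≠ ⊤ ∧ ∀ x : ℝ, ∀ r : ℝ, 0 < r →
        apProduct p p' (-((k : ℝ) + 1) * p + s + 2 * k) ((1 - s - (k : ℝ)) * p + s + 2 * k)
            (Metric.ball (x : ℂ) r ∩ upperHalf) ≤ c)
      ↔ (s + 2 * (k : ℝ) + 2 > ((k : ℝ) + 1) * p ∧ p * (s + (k : ℝ) + 1) > s + 2 * k + 2) := by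
  have hp0 : (0:ℝ) < p := by linarith
  have hp1 : (0:ℝ) < p - 1 := by linarith
  have hp'pos : 0 < p' := by
    have h1 : 1/p < 1 := by rw [div_lt_one hp0]; exact hp
    have h2 : 0 < 1/p' := by linarith
    exact one_div_pos.mp h2
  have hpne : p ≠ 0 := hp0.ne'
  have hp'ne : p' ≠ 0 := hp'pos.ne'
  have hkey : p' + p = p * p' := by
    field_simp at hpp'
    linarith
  have hquot : p' / p = 1 / (p - 1) := by
    rw [div_eq_div_iff hp0.ne' hp1.ne']
    nlinarith
  have hquot2 : p / p' = p - 1 := by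
    rw [div_eq_iff hp'ne]
    nlinarith
  set b : ℝ := (1 - s - (k:ℝ)) * p + s + 2 * k with hb
  set a1 : ℝ := -((k : ℝ) + 1) * p + s + 2 * k with ha1
  constructor
  · -- A_p condition implies the exponent conditions
    rintro ⟨c, hctop, hbound⟩
    by_contra hcon
    have hbound0 := hbound 0 2 (by norm_num)
    obtain ⟨hlb, hne0, hnetop⟩ := volD_facts 0 2 (by norm_num)
    set D : Set ℂ := ball (((0:ℝ)):ℂ) 2 ∩ upperHalf with hD
    have hinvne : (volume D)⁻¹ ≠ 0 := ENNReal.inv_ne_zero.mpr hnetop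
    have htop : apProduct p p' a1 b D = ⊤ := by
      rcases not_and_or.mp hcon with hA | hB
      · -- first weight not integrable
        have ha1le : a1 ≤ -2 := by
          rw [not_lt] at hA
          rw [ha1]; linarith
        have hI1 : (∫⁻ z in D, ENNReal.ofReal (cayleyAbs z ^ a1)) = ⊤ := lintegral_top_D0 ha1le
        have hfac1 : (volume D)⁻¹ * (∫⁻ z in D, ENNReal.ofReal (cayleyAbs z ^ a1)) = ⊤ := by
          rw [hI1, ENNReal.mul_top hinvne]
        have hfac2ne : ((volume D)⁻¹ *
            ∫⁻ z in D, ENNReal.ofReal (cayleyAbs z ^ (-(p' / p) * b))) ^ (p / p') ≠ 0 := by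
          rw [ne_eq, ENNReal.rpow_eq_zero_iff]
          push_neg
          constructor
          · intro h
            exact absurd h (mul_ne_zero hinvne (lintegral_pos_D0 _).ne')
          · intro _
            rw [hquot2]; linarith
        rw [apProduct, hfac1, ENNReal.top_mul hfac2ne]
      · -- second weight not integrable
        have hble : 2 * (p - 1) ≤ b := by
          rw [not_lt] at hB
          rw [hb]; nlinarith
        have ha2le : -(p' / p) * b ≤ -2 := by
          rw [hquot]
          have hbdiv : (2:ℝ) ≤ 1 / (p - 1) * b := by
            rw [one_div, inv_mul_eq_div, le_div_iff₀ hp1]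
            linarith
          linarith
        have hI2 : (∫⁻ z in D, ENNReal.ofReal (cayleyAbs z ^ (-(p' / p) * b))) = ⊤ :=
          lintegral_top_D0 ha2le
        have hfac2 : ((volume D)⁻¹ *
            ∫⁻ z in D, ENNReal.ofReal (cayleyAbs z ^ (-(p' / p) * b))) ^ (p / p') = ⊤ := by
          rw [hI2, ENNReal.mul_top hinvne, ENNReal.top_rpow_of_pos (by rw [hquot2]; linarith)]
        have hfac1ne : (volume D)⁻¹ *
            (∫⁻ z in D, ENNReal.ofReal (cayleyAbs z ^ a1)) ≠ 0 :=
          mul_ne_zero hinvne (lintegral_pos_D0 _).ne'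
        rw [apProduct, hfac2, ENNReal.mul_top hfac1ne]
    rw [htop] at hbound0
    exact hctop (top_le_iff.mp hbound0)
  · -- exponent conditions imply the A_p condition
    rintro ⟨h1, h2⟩
    have ha1gt : -2 < a1 := by rw [ha1]; linarith
    have ha2gt : -2 < -(p' / p) * b := by
      have hblt : b < 2 * (p - 1) := by rw [hb]; nlinarith
      rw [hquot]
      have : 1 / (p - 1) * b < 2 := by
        rw [one_div, inv_mul_eq_div, div_lt_iff₀ hp1]
        linarith
      linarith
    obtain ⟨C1, hC1top, hC1⟩ := avg_bound ha1gt
    obtain ⟨C2, hC2top, hC2⟩ := avg_bound ha2gt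
    have hexp : (0:ℝ) ≤ p / p' := by rw [hquot2]; linarith
    refine ⟨C1 * C2 ^ (p / p'), ?_, ?_⟩
    · exact ENNReal.mul_ne_top hC1top (ENNReal.rpow_ne_top_of_nonneg hexp hC2top)
    · intro x r hr
      rw [apProduct]
      exact mul_le_mul' (hC1 x r hr) (ENNReal.rpow_le_rpow (hC2 x r hr) hexp)
end
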